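/- In a free group, if an element x commutes with a nontrivial element w (i.e. x*w = w*x with w ≠ 1), and y also commutes with w, then x and y commute with each other. Equivalently, the centralizer of any nontrivial element of a free group is abelian (in fact infinite cyclic). -/

import Mathlib

/-!
The centralizer of `w` is a subgroup of a free group, hence free by Nielsen–Schreier, and `w` is a
nontrivial central element of it. In a free group a nontrivial central element `z` forces at most
one generator: for each generator `a`, one of `a`, `a⁻¹` does not cancel against the reduced word
of `z`, so `z` commuting with it makes that word a rotation of itself, i.e. a power of the letter;
and a nontrivial power of `a` is not a power of a different generator `b`. A free group of rank at
most one is trivial or `ℤ`, hence abelian.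
-/

theorem List.eq_replicate_of_append_singleton_eq_cons {β : Type*} {x : β} :
    ∀ {l : List β}, l ++ [x] = x :: l → l = List.replicate l.length x
  | [], _ => rfl
  | y :: l, h => by
    obtain ⟨rfl, h⟩ := List.cons_eq_cons.1 h
    simp only [List.length_cons, List.replicate_succ,
      ← List.eq_replicate_of_append_singleton_eq_cons h]

namespace FreeGroup

variable {β : Type*}

theorem mk_replicate (x : β × Bool) (n : ℕ) : mk (List.replicate n x) = mk [x] ^ n := by
  induction n with
  | zero => rfl
  | succ n ih => rw [List.replicate_succ', ← mul_mk, ih, pow_succ]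

theorem exists_isReduced_cons (a : β) {L : List (β × Bool)} (hL : IsReduced L) :
    ∃ s, IsReduced ((a, s) :: L) :=
  match L, hL with
  | [], _ => ⟨true, .singleton⟩
  | (_, t) :: _, hL => ⟨t, isReduced_cons_cons.2 ⟨fun _ => rfl, hL⟩⟩

theorem toWord_append_comm_of_commute [DecidableEq β] {g z : FreeGroup β} (h : Commute z g)
    (hgz : (g * z).toWord = g.toWord ++ z.toWord) :
    z.toWord ++ g.toWord = g.toWord ++ z.toWord := by
  have hsub : List.Sublist (g * z).toWord (z.toWord ++ g.toWord) :=
    h.eq ▸ toWord_mul_sublist z g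
  rw [hgz] at hsub
  exact (hsub.eq_of_length (by simp [add_comm])).symm

theorem mem_zpowers_of_commute_of {z : FreeGroup β} {a : β} (h : Commute z (of a)) :
    z ∈ Subgroup.zpowers (of a) := by
  classical
  obtain ⟨s, hs⟩ := exists_isReduced_cons a (isReduced_toWord (x := z))
  have hg : mk [(a, s)] ∈ Subgroup.zpowers (of a) ∧ Commute z (mk [(a, s)]) := by
    cases s
    · exact ⟨inv_mem (Subgroup.mem_zpowers _), h.inv_right⟩
    · exact ⟨Subgroup.mem_zpowers _, h⟩
  have hword : (mk [(a, s)]).toWord = [(a, s)] := by rw [toWord_mk, reduce_singleton]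
  have hcomm := toWord_append_comm_of_commute hg.2 <| by
    rw [toWord_mul, hword, List.singleton_append, hs.reduce_eq]
  rw [hword, List.singleton_append] at hcomm
  rw [← mk_toWord (x := z), List.eq_replicate_of_append_singleton_eq_cons hcomm, mk_replicate]
  exact pow_mem hg.1 _

theorem subsingleton_of_ne_one_of_forall_commute {z : FreeGroup β} (hz : z ≠ 1)
    (hcent : ∀ g, Commute z g) : Subsingleton β := by
  classical
  refine ⟨fun a b => by_contra fun hab => hz ?_⟩
  obtain ⟨m, rfl⟩ := Subgroup.mem_zpowers_iff.1 (mem_zpowers_of_commute_of (hcent (of a)))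
  obtain ⟨k, hk⟩ := Subgroup.mem_zpowers_iff.1 (mem_zpowers_of_commute_of (hcent (of b)))
  let count : FreeGroup β →* Multiplicative ℤ := lift fun c => if c = b then .ofAdd 1 else 1
  have hk0 : k = 0 := by simpa [count, hab] using congrArg count hk
  rw [← hk, hk0, zpow_zero]

theorem commute_of_subsingleton [Subsingleton β] (x y : FreeGroup β) : Commute x y := by
  cases isEmpty_or_nonempty β
  · exact Subsingleton.elim _ _
  · have := uniqueOfSubsingleton (Classical.arbitrary β)
    exact (Commute.all _ _).of_map mulEquivIntOfUnique.injective

end FreeGroup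

theorem IsFreeGroup.commute_of_ne_one_of_forall_commute {G : Type*} [Group G] [IsFreeGroup G]
    {z : G} (hz : z ≠ 1) (hcent : ∀ g, Commute z g) (x y : G) : Commute x y := by
  let e := IsFreeGroup.toFreeGroup G
  have := FreeGroup.subsingleton_of_ne_one_of_forall_commute (z := e z) (by simpa using hz)
    fun g => by simpa using (hcent (e.symm g)).map e
  exact (FreeGroup.commute_of_subsingleton (e x) (e y)).of_map e.injective

theorem stmt_3 {α : Type*} (w x y : FreeGroup α) (hw : w ≠ 1)
    (hx : x * w = w * x) (hy : y * w = w * y) :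
    x * y = y * x := by
  let C := Subgroup.centralizer {w}
  have hwC : w ∈ C := Subgroup.mem_centralizer_singleton_iff.2 rfl
  have hC : Commute (⟨x, Subgroup.mem_centralizer_singleton_iff.2 hx⟩ : C)
      ⟨y, Subgroup.mem_centralizer_singleton_iff.2 hy⟩ :=
    IsFreeGroup.commute_of_ne_one_of_forall_commute (z := ⟨w, hwC⟩) (by simpa using hw)
      (fun g => Subtype.ext (Subgroup.mem_centralizer_singleton_iff.1 g.2).symm) _ _
  exact congrArg Subtype.val hC.eq
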